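/- arXiv:1703.06518 — 2 statements merged into one kernel-verified Lean document; each statement's English description precedes it below -/
import Mathlib

section
/- Let P₁ be the uniform distribution on [0, 1/2] and n ∈ ℕ. Then the set {(2i−1)/(4n) : 1 ≤ i ≤ n} is an optimal set of n-means for P₁, with quantization error V_n(P₁) = 1/(48n²). -/
/-!
Writing `d(x)` for the distance from `x` to a finite set `γ` of `m` points, the set `{d ≤ t}` is
covered by `m` intervals of length `2t`, so `{d > t}` fills at least `L - 2mt` of an interval of
length `L`. The layer cake formula then gives `∫ d² ≥ L³ / 12m²` over the interval. The `n`
midpoints of the cells of the uniform partition into `n` pieces attain this bound, since on each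
cell the nearest midpoint is the cell's own one.
-/

open MeasureTheory Set Filter Real
open scoped ENNReal

/-- Distortion error of a finite set of quantizers `γ` for the measure `P`. -/
noncomputable def distortion (P : Measure ℝ) (γ : Finset ℝ) : ℝ :=
  ∫ x, (⨅ c : γ, (x - (c : ℝ)) ^ 2) ∂P

/-- The `n`-th quantization error of `P`. -/
noncomputable def quantErr (P : Measure ℝ) (n : ℕ) : ℝ :=
  sInf {v : ℝ | ∃ γ : Finset ℝ, γ.Nonempty ∧ γ.card ≤ n ∧ v = distortion P γ}

/-- `γ` is an optimal set of `n`-means for `P`. -/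
def IsOptimalSet (P : Measure ℝ) (n : ℕ) (γ : Finset ℝ) : Prop :=
  γ.Nonempty ∧ γ.card ≤ n ∧ distortion P γ = quantErr P n

/-- Uniform distribution on `[a, b]`. -/
noncomputable def unif (a b : ℝ) : Measure ℝ :=
  (ENNReal.ofReal (b - a))⁻¹ • (volume.restrict (Icc a b))

/-- The uniform discrete measure on `{2/3, 5/6, 1}`. -/
noncomputable def discD : Measure ℝ :=
  (3 : ℝ≥0∞)⁻¹ • (Measure.dirac (2/3) + Measure.dirac (5/6) + Measure.dirac 1)

/-- Mixture `(1/2)P₁ + (1/2)P₂`. -/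
noncomputable def mix (P₁ P₂ : Measure ℝ) : Measure ℝ :=
  (2 : ℝ≥0∞)⁻¹ • P₁ + (2 : ℝ≥0∞)⁻¹ • P₂

open Metric

lemma iInf_sq_sub_eq_infDist_sq {γ : Finset ℝ} (hγ : γ.Nonempty) (x : ℝ) :
    ⨅ c : γ, (x - (c : ℝ)) ^ 2 = infDist x (γ : Set ℝ) ^ 2 := by
  have : Nonempty γ := hγ.to_subtype
  obtain ⟨c, hc, hxc⟩ := γ.finite_toSet.isCompact.exists_infDist_eq_dist hγ x
  refine le_antisymm ?_ (le_ciInf fun y => ?_)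
  · refine (ciInf_le ⟨0, ?_⟩ ⟨c, hc⟩).trans_eq ?_
    · rintro _ ⟨y, rfl⟩; positivity
    · rw [hxc, Real.dist_eq, sq_abs]
  · rw [← sq_abs (x - y), ← Real.dist_eq]
    exact pow_le_pow_left₀ infDist_nonneg (infDist_le_dist_of_mem y.2) 2

lemma distortion_eq_integral_infDist_sq (P : Measure ℝ) {γ : Finset ℝ} (hγ : γ.Nonempty) :
    distortion P γ = ∫ x, infDist x (γ : Set ℝ) ^ 2 ∂P := by
  simp only [distortion, iInf_sq_sub_eq_infDist_sq hγ]

lemma integral_unif {a b : ℝ} (hab : a ≤ b) (f : ℝ → ℝ) :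
    ∫ x, f x ∂(unif a b) = (b - a)⁻¹ * ∫ x in Icc a b, f x := by
  rw [unif, integral_smul_measure, ENNReal.toReal_inv, ENNReal.toReal_ofReal (sub_nonneg.2 hab),
    smul_eq_mul]

lemma volume_setOf_infDist_le_le {γ : Finset ℝ} (hγ : γ.Nonempty) (t : ℝ) :
    volume {x | infDist x (γ : Set ℝ) ≤ t} ≤ ENNReal.ofReal (2 * γ.card * t) := by
  have hsub : {x | infDist x (γ : Set ℝ) ≤ t} ⊆ ⋃ c ∈ γ, closedBall c t := by
    intro x hx
    obtain ⟨c, hc, hxc⟩ := γ.finite_toSet.isCompact.exists_infDist_eq_dist hγ x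
    exact mem_biUnion hc (by rw [mem_closedBall, ← hxc]; exact hx)
  calc volume {x | infDist x (γ : Set ℝ) ≤ t} ≤ ∑ c ∈ γ, volume (closedBall c t) :=
        (measure_mono hsub).trans (measure_biUnion_finset_le γ _)
    _ = ENNReal.ofReal (2 * γ.card * t) := by
        simp only [Real.volume_closedBall, Finset.sum_const, nsmul_eq_mul]
        rw [← ENNReal.ofReal_natCast, ← ENNReal.ofReal_mul (by positivity)]
        ring_nf

lemma ofReal_le_volume_Icc_inter_setOf_lt_infDist {γ : Finset ℝ} (hγ : γ.Nonempty) (a b : ℝ)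
    {t : ℝ} (ht : 0 ≤ t) :
    ENNReal.ofReal (b - a - 2 * γ.card * t) ≤
      volume ({x | t < infDist x (γ : Set ℝ)} ∩ Icc a b) := by
  have hcover : Icc a b ⊆ ({x | t < infDist x (γ : Set ℝ)} ∩ Icc a b) ∪
      {x | infDist x (γ : Set ℝ) ≤ t} := fun x hx => by
    by_cases h : t < infDist x (γ : Set ℝ)
    · exact Or.inl ⟨h, hx⟩
    · exact Or.inr (not_lt.1 h)
  have hvol : ENNReal.ofReal (b - a) ≤ volume ({x | t < infDist x (γ : Set ℝ)} ∩ Icc a b) +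
      ENNReal.ofReal (2 * γ.card * t) :=
    calc ENNReal.ofReal (b - a) = volume (Icc a b) := (Real.volume_Icc).symm
      _ ≤ _ := (measure_mono hcover).trans (measure_union_le _ _)
      _ ≤ _ := add_le_add le_rfl (volume_setOf_infDist_le_le hγ t)
  rw [ENNReal.ofReal_sub _ (by positivity)]
  exact tsub_le_iff_right.2 hvol

lemma integral_sub_mul_mul_two_mul (L m T : ℝ) :
    ∫ t in (0:ℝ)..T, (L - 2 * m * t) * (2 * t) = L * T ^ 2 - 4 * m * T ^ 3 / 3 := by
  have h : (fun t : ℝ => (L - 2 * m * t) * (2 * t)) = fun t => 2 * L * t - 4 * m * t ^ 2 := by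
    funext t; ring
  rw [h, intervalIntegral.integral_sub, intervalIntegral.integral_const_mul,
    intervalIntegral.integral_const_mul, integral_id, integral_pow]
  · ring
  all_goals exact (by fun_prop : Continuous _).intervalIntegrable _ _

lemma ofReal_le_setLIntegral_infDist_sq {γ : Finset ℝ} (hγ : γ.Nonempty) {a b : ℝ}
    (hab : a ≤ b) :
    ENNReal.ofReal ((b - a) ^ 3 / (12 * γ.card ^ 2)) ≤
      ∫⁻ x in Icc a b, ENNReal.ofReal (infDist x (γ : Set ℝ) ^ 2) := by
  set f : ℝ → ℝ := fun x => infDist x (γ : Set ℝ)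
  set μ := volume.restrict (Icc a b)
  set L := b - a
  set m : ℝ := (γ.card : ℝ)
  have hm : 0 < m := by simp only [m, Nat.cast_pos, Finset.card_pos, hγ]
  set T := L / (2 * m)
  have hT : 0 ≤ T := div_nonneg (sub_nonneg.2 hab) (by positivity)
  have hlayer := lintegral_comp_eq_lintegral_meas_lt_mul μ (f := f) (g := fun t => 2 * t)
    (Eventually.of_forall fun _ => infDist_nonneg) (continuous_infDist_pt _).aemeasurable
    (fun _ _ => (by fun_prop : Continuous fun t : ℝ => 2 * t).intervalIntegrable _ _)
    (ae_restrict_of_forall_mem measurableSet_Ioi fun t ht => by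
      have : (0:ℝ) < t := ht; positivity)
  have hsq : ∀ x, ∫ t in (0:ℝ)..f x, 2 * t = f x ^ 2 := fun x => by
    rw [intervalIntegral.integral_const_mul, integral_id]; ring
  simp only [hsq] at hlayer
  have htail : ∀ t ∈ Ioc 0 T,
      ENNReal.ofReal ((L - 2 * m * t) * (2 * t)) ≤ μ {x | t < f x} * ENNReal.ofReal (2 * t) := by
    intro t ht
    have hmeas : MeasurableSet {x | t < f x} :=
      measurableSet_lt measurable_const (continuous_infDist_pt _).measurable
    rw [ENNReal.ofReal_mul' (by linarith [ht.1]), Measure.restrict_apply hmeas]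
    exact mul_le_mul_left (ofReal_le_volume_Icc_inter_setOf_lt_infDist hγ a b ht.1.le) _
  have hnonneg : ∀ t ∈ Ioc 0 T, 0 ≤ (L - 2 * m * t) * (2 * t) := fun t ht => by
    have : 2 * m * t ≤ L := by
      have := ht.2; rw [le_div_iff₀ (by positivity)] at this; linarith
    exact mul_nonneg (by linarith) (by linarith [ht.1])
  calc ENNReal.ofReal (L ^ 3 / (12 * m ^ 2))
      = ENNReal.ofReal (∫ t in Ioc 0 T, (L - 2 * m * t) * (2 * t)) := by
        rw [← intervalIntegral.integral_of_le hT, integral_sub_mul_mul_two_mul]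
        congr 1; simp only [T]; field_simp; ring
    _ = ∫⁻ t in Ioc 0 T, ENNReal.ofReal ((L - 2 * m * t) * (2 * t)) :=
        ofReal_integral_eq_lintegral_ofReal (by fun_prop : Continuous _).integrableOn_Ioc
          (ae_restrict_of_forall_mem measurableSet_Ioc hnonneg)
    _ ≤ ∫⁻ t in Ioc 0 T, μ {x | t < f x} * ENNReal.ofReal (2 * t) :=
        setLIntegral_mono' measurableSet_Ioc htail
    _ ≤ ∫⁻ t in Ioi 0, μ {x | t < f x} * ENNReal.ofReal (2 * t) :=
        lintegral_mono_set Ioc_subset_Ioi_self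
    _ = _ := hlayer.symm

lemma div_le_distortion_unif {a b : ℝ} (hab : a < b) {γ : Finset ℝ} (hγ : γ.Nonempty) :
    (b - a) ^ 2 / (12 * γ.card ^ 2) ≤ distortion (unif a b) γ := by
  have hint : IntegrableOn (fun x => infDist x (γ : Set ℝ) ^ 2) (Icc a b) :=
    ((continuous_infDist_pt _).pow 2).integrableOn_Icc
  have hnonneg : 0 ≤ᵐ[volume.restrict (Icc a b)] fun x => infDist x (γ : Set ℝ) ^ 2 :=
    Eventually.of_forall fun _ => by positivity
  have hlower :
      (b - a) ^ 3 / (12 * γ.card ^ 2) ≤ ∫ x in Icc a b, infDist x (γ : Set ℝ) ^ 2 := by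
    rw [← ENNReal.ofReal_le_ofReal_iff (integral_nonneg_of_ae hnonneg),
      ofReal_integral_eq_lintegral_ofReal hint hnonneg]
    exact ofReal_le_setLIntegral_infDist_sq hγ hab.le
  rw [distortion_eq_integral_infDist_sq _ hγ, integral_unif hab.le]
  calc (b - a) ^ 2 / (12 * γ.card ^ 2) = (b - a)⁻¹ * ((b - a) ^ 3 / (12 * γ.card ^ 2)) := by
        field_simp [(sub_pos.2 hab).ne']
    _ ≤ _ := mul_le_mul_of_nonneg_left hlower (inv_nonneg.2 (sub_pos.2 hab).le)

noncomputable def midpointGrid (a b : ℝ) (n : ℕ) : Finset ℝ :=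
  (Finset.range n).image fun i : ℕ => a + (2 * i + 1) * (b - a) / (2 * n)

lemma midpointGrid_nonempty (a b : ℝ) {n : ℕ} (hn : 0 < n) : (midpointGrid a b n).Nonempty :=
  (Finset.nonempty_range_iff.2 hn.ne').image _

lemma card_midpointGrid_le (a b : ℝ) (n : ℕ) : (midpointGrid a b n).card ≤ n :=
  Finset.card_image_le.trans (Finset.card_range n).le

lemma infDist_midpointGrid {a b : ℝ} {n i : ℕ} (hi : i < n) {x : ℝ}
    (hx : x ∈ Icc (a + i * (b - a) / n) (a + (i + 1) * (b - a) / n)) :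
    infDist x (midpointGrid a b n : Set ℝ) = |x - (a + (2 * i + 1) * (b - a) / (2 * n))| := by
  have hn : (0:ℝ) < n := by exact_mod_cast (Nat.zero_le i).trans_lt hi
  set h := (b - a) / n
  have hcenter : ∀ j : ℕ, a + (2 * j + 1) * (b - a) / (2 * n) = a + (j + 1 / 2) * h :=
    fun j => by simp only [h]; field_simp
  have hx' : a + i * h ≤ x ∧ x ≤ a + (i + 1) * h := by
    simpa only [h, mul_div_assoc, mem_Icc] using hx
  have hmem : a + (2 * i + 1) * (b - a) / (2 * n) ∈ midpointGrid a b n :=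
    Finset.mem_image_of_mem _ (Finset.mem_range.2 hi)
  refine le_antisymm
    ((infDist_le_dist_of_mem (by exact_mod_cast hmem)).trans_eq (Real.dist_eq _ _))
    ((le_infDist ⟨_, hmem⟩).2 ?_)
  rintro _ hy
  obtain ⟨j, -, rfl⟩ := Finset.mem_image.1 (Finset.mem_coe.1 hy)
  rw [Real.dist_eq, hcenter, hcenter]
  have hnear : |x - (a + (i + 1 / 2) * h)| ≤ h / 2 := abs_le.2 ⟨by linarith, by linarith⟩
  rcases lt_trichotomy j i with hji | rfl | hji
  · have : (j : ℝ) + 1 ≤ i := by exact_mod_cast hji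
    exact hnear.trans (le_abs.2 (Or.inl (by nlinarith)))
  · exact le_rfl
  · have : (i : ℝ) + 1 ≤ j := by exact_mod_cast hji
    exact hnear.trans (le_abs.2 (Or.inr (by nlinarith)))

lemma integral_infDist_midpointGrid_sq_cell {a b : ℝ} (hab : a < b) {n i : ℕ} (hi : i < n) :
    ∫ x in (a + i * (b - a) / n)..(a + (i + 1) * (b - a) / n),
      infDist x (midpointGrid a b n : Set ℝ) ^ 2 = ((b - a) / n) ^ 3 / 12 := by
  have hn : (0:ℝ) < n := by exact_mod_cast (Nat.zero_le i).trans_lt hi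
  have hle : a + i * (b - a) / n ≤ a + (i + 1) * (b - a) / n := by
    gcongr; linarith
  rw [intervalIntegral.integral_congr
    (g := fun x => (x - (a + (2 * i + 1) * (b - a) / (2 * n))) ^ 2) fun x hx => by
    rw [uIcc_of_le hle] at hx
    simp only [infDist_midpointGrid hi hx, sq_abs]]
  rw [intervalIntegral.integral_comp_sub_right (fun x => x ^ 2), integral_pow]
  push_cast
  field_simp
  ring

lemma setIntegral_infDist_midpointGrid_sq {a b : ℝ} (hab : a < b) {n : ℕ} (hn : 0 < n) :
    ∫ x in Icc a b, infDist x (midpointGrid a b n : Set ℝ) ^ 2 =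
      (b - a) ^ 3 / (12 * n ^ 2) := by
  set node : ℕ → ℝ := fun k => a + k * (b - a) / n
  have hsum := intervalIntegral.sum_integral_adjacent_intervals
    (f := fun x => infDist x (midpointGrid a b n : Set ℝ) ^ 2) (a := node) (n := n)
    (μ := volume) fun k _ => ((continuous_infDist_pt _).pow 2).intervalIntegrable _ _
  have hnode_zero : node 0 = a := by simp [node]
  have hnode_n : node n = b := by simp only [node]; field_simp; ring
  have hIcc : ∫ x in Icc a b, infDist x (midpointGrid a b n : Set ℝ) ^ 2 =
      ∫ x in node 0..node n, infDist x (midpointGrid a b n : Set ℝ) ^ 2 := by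
    rw [hnode_zero, hnode_n, intervalIntegral.integral_of_le hab.le, integral_Icc_eq_integral_Ioc]
  have hcell : ∀ k ∈ Finset.range n,
      ∫ x in node k..node (k + 1), infDist x (midpointGrid a b n : Set ℝ) ^ 2 =
        ((b - a) / n) ^ 3 / 12 := fun k hk => by
    simpa only [node, Nat.cast_succ] using
      integral_infDist_midpointGrid_sq_cell hab (Finset.mem_range.1 hk)
  rw [hIcc, ← hsum, Finset.sum_congr rfl hcell, Finset.sum_const, Finset.card_range,
    nsmul_eq_mul]
  field_simp

lemma distortion_unif_midpointGrid {a b : ℝ} (hab : a < b) {n : ℕ} (hn : 0 < n) :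
    distortion (unif a b) (midpointGrid a b n) = (b - a) ^ 2 / (12 * n ^ 2) := by
  rw [distortion_eq_integral_infDist_sq _ (midpointGrid_nonempty a b hn), integral_unif hab.le,
    setIntegral_infDist_midpointGrid_sq hab hn]
  field_simp [(sub_pos.2 hab).ne']

theorem isLeast_distortion_unif {a b : ℝ} (hab : a < b) {n : ℕ} (hn : 0 < n) :
    IsLeast
      {v | ∃ γ : Finset ℝ, γ.Nonempty ∧ γ.card ≤ n ∧ v = distortion (unif a b) γ}
      ((b - a) ^ 2 / (12 * n ^ 2)) := by
  refine ⟨⟨midpointGrid a b n, midpointGrid_nonempty a b hn, card_midpointGrid_le a b n,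
    (distortion_unif_midpointGrid hab hn).symm⟩, ?_⟩
  rintro _ ⟨γ, hγ, hcard, rfl⟩
  calc (b - a) ^ 2 / (12 * n ^ 2) ≤ (b - a) ^ 2 / (12 * γ.card ^ 2) := by
        gcongr
    _ ≤ distortion (unif a b) γ := div_le_distortion_unif hab hγ

theorem quantErr_unif {a b : ℝ} (hab : a < b) {n : ℕ} (hn : 0 < n) :
    quantErr (unif a b) n = (b - a) ^ 2 / (12 * n ^ 2) :=
  (isLeast_distortion_unif hab hn).csInf_eq

theorem isOptimalSet_unif_midpointGrid {a b : ℝ} (hab : a < b) {n : ℕ} (hn : 0 < n) :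
    IsOptimalSet (unif a b) n (midpointGrid a b n) :=
  ⟨midpointGrid_nonempty a b hn, card_midpointGrid_le a b n,
    (distortion_unif_midpointGrid hab hn).trans (quantErr_unif hab hn).symm⟩

theorem stmt2 (n : ℕ) (hn : 1 ≤ n) :
    IsOptimalSet (unif 0 (1/2)) n
      (Finset.image (fun i : ℕ => (2 * (i : ℝ) + 1) / (4 * n)) (Finset.range n)) ∧
    quantErr (unif 0 (1/2)) n = 1 / (48 * n ^ 2) := by
  have hgrid : midpointGrid 0 (1/2) n =
      Finset.image (fun i : ℕ => (2 * (i : ℝ) + 1) / (4 * n)) (Finset.range n) := by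
    simp only [midpointGrid]; congr 1; funext i; ring
  rw [← hgrid, quantErr_unif (by norm_num) hn]
  exact ⟨isOptimalSet_unif_midpointGrid (by norm_num) hn, by ring⟩
end

section
/- Let P₁, P₂ be the self-similar measures with P₁ = (1/2)P₁∘S₁⁻¹ + (1/2)P₁∘S₂⁻¹ (S₁(x)=x/3, S₂(x)=x/3+2/9) and P₂ = (1/2)P₂∘T₁⁻¹ + (1/2)P₂∘T₂⁻¹ (T₁(x)=x/4+1/2, T₂(x)=x/4+3/4), and let P = (1/2)P₁ + (1/2)P₂. Then the quantization dimension of P exists and equals log 2 / log 3 = max{D(P₁), D(P₂)}, where D(P₁) = log 2/log 3 and D(P₂) = 1/2. -/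
open MeasureTheory Set Filter Real
open scoped ENNReal

/-!
Let `Q` be self-similar under `x ↦ x / s + a` and `x ↦ x / s + b` (weights `1/2`), where both
maps send an interval `[A, B]` into itself with images at distance `g > 0`. By contraction `Q`
lives on `[A, B]`, and the error `V_n` of `n`-point quantization satisfies
`V_{2^k} ≍ s^(-2k)`: mapping a configuration through both maps gives `V_{2^(k+1)} ≤ V_{2^k} / s²`,
while separation forces every ball of radius `g / (2 s^k)` to have mass at most `2^(-k)`, so
`2^k` points leave a quarter of the mass at distance `≍ s^(-k)`. As `V_n` is antitone, this gives
`log V_n = -2 log s · log₂ n + O(1)`, i.e. quantization dimension `log 2 / log s`. In the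
mixture, both bounds are dominated by the component with the smaller `s`.
-/

open Topology

noncomputable def minSqDist (γ : Finset ℝ) (x : ℝ) : ℝ :=
  ⨅ c : γ, (x - (c : ℝ)) ^ 2

section MinSqDist

variable {γ γ' : Finset ℝ} {x : ℝ}

theorem distortion_eq_integral_minSqDist (P : Measure ℝ) (γ : Finset ℝ) :
    distortion P γ = ∫ x, minSqDist γ x ∂P := rfl

theorem minSqDist_nonneg : 0 ≤ minSqDist γ x :=
  Real.iInf_nonneg fun _ => sq_nonneg _

theorem minSqDist_le {c : ℝ} (hc : c ∈ γ) : minSqDist γ x ≤ (x - c) ^ 2 :=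
  ciInf_le ⟨0, by rintro _ ⟨_, rfl⟩; exact sq_nonneg _⟩ (⟨c, hc⟩ : γ)

theorem le_minSqDist {d : ℝ} (hγ : γ.Nonempty) (h : ∀ c ∈ γ, d ≤ (x - c) ^ 2) :
    d ≤ minSqDist γ x :=
  have : Nonempty γ := hγ.coe_sort
  le_ciInf fun c => h c c.2

theorem minSqDist_anti (hγ : γ.Nonempty) (h : γ ⊆ γ') : minSqDist γ' x ≤ minSqDist γ x :=
  le_minSqDist hγ fun _ hc => minSqDist_le (h hc)

theorem continuous_minSqDist (hγ : γ.Nonempty) : Continuous (minSqDist γ) := by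
  have : Nonempty γ := hγ.coe_sort
  have h : minSqDist γ = fun x => Finset.univ.inf' Finset.univ_nonempty
      fun c : γ => (x - (c : ℝ)) ^ 2 :=
    funext fun x => (Finset.inf'_univ_eq_ciInf _).symm
  rw [h]
  exact Continuous.finset_inf'_apply _ fun _ _ => by fun_prop

end MinSqDist

theorem Continuous.integrable_of_ae_mem {X : Type*} [TopologicalSpace X] [MeasurableSpace X]
    [OpensMeasurableSpace X] [T2Space X] {Q : Measure X} [IsFiniteMeasureOnCompacts Q] {K : Set X}
    (hK : IsCompact K) (hQK : ∀ᵐ x ∂Q, x ∈ K) {f : X → ℝ} (hf : Continuous f) :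
    Integrable f Q := by
  simpa [IntegrableOn, Measure.restrict_eq_self_of_ae_mem hQK] using
    hf.continuousOn.integrableOn_compact (μ := Q) hK

section Quantization

variable (P : Measure ℝ) {γ γ' : Finset ℝ} {n : ℕ}

theorem distortion_nonneg : 0 ≤ distortion P γ :=
  integral_nonneg fun _ => minSqDist_nonneg

theorem bddBelow_distortions (n : ℕ) :
    BddBelow {v : ℝ | ∃ γ : Finset ℝ, γ.Nonempty ∧ γ.card ≤ n ∧ v = distortion P γ} :=
  ⟨0, by rintro _ ⟨γ, -, -, rfl⟩; exact distortion_nonneg P⟩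

theorem quantErr_le_distortion (hγ : γ.Nonempty) (hcard : γ.card ≤ n) :
    quantErr P n ≤ distortion P γ :=
  csInf_le (bddBelow_distortions P n) ⟨γ, hγ, hcard, rfl⟩

theorem le_quantErr (hn : 1 ≤ n) {d : ℝ}
    (h : ∀ γ : Finset ℝ, γ.Nonempty → γ.card ≤ n → d ≤ distortion P γ) : d ≤ quantErr P n :=
  le_csInf ⟨_, {0}, Finset.singleton_nonempty 0, by simpa using hn, rfl⟩
    (by rintro _ ⟨γ, hγ, hcard, rfl⟩; exact h γ hγ hcard)

theorem quantErr_antitone {m : ℕ} (hm : 1 ≤ m) (hmn : m ≤ n) : quantErr P n ≤ quantErr P m :=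
  le_quantErr P hm fun _ hγ hcard => quantErr_le_distortion P hγ (hcard.trans hmn)

theorem distortion_anti (hγ : γ.Nonempty) (h : γ ⊆ γ')
    (hint : Integrable (minSqDist γ) P) (hint' : Integrable (minSqDist γ') P) :
    distortion P γ' ≤ distortion P γ :=
  integral_mono hint' hint fun _ => minSqDist_anti hγ h

theorem distortion_mix (P₁ P₂ : Measure ℝ) (h₁ : Integrable (minSqDist γ) P₁)
    (h₂ : Integrable (minSqDist γ) P₂) :
    distortion (mix P₁ P₂) γ = 2⁻¹ * distortion P₁ γ + 2⁻¹ * distortion P₂ γ := by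
  rw [distortion_eq_integral_minSqDist, mix, integral_add_measure (h₁.smul_measure (by simp))
    (h₂.smul_measure (by simp)), integral_smul_measure, integral_smul_measure]
  simp [distortion_eq_integral_minSqDist]

theorem measureReal_compl_mul_sq_le_distortion [IsFiniteMeasure P] (hγ : γ.Nonempty)
    (hint : Integrable (minSqDist γ) P) {ε : ℝ} (hε : 0 ≤ ε) :
    P.real (⋃ c ∈ γ, Metric.ball c ε)ᶜ * ε ^ 2 ≤ distortion P γ := by
  set E := ⋃ c ∈ γ, Metric.ball c ε
  have hE : MeasurableSet E := γ.measurableSet_biUnion fun _ _ => measurableSet_ball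
  calc P.real Eᶜ * ε ^ 2 = ∫ x, Eᶜ.indicator (fun _ => ε ^ 2) x ∂P := by
        rw [integral_indicator_const _ hE.compl, smul_eq_mul]
    _ ≤ distortion P γ := by
      refine integral_mono ((integrable_const _).indicator hE.compl) hint fun x => ?_
      by_cases hx : x ∈ Eᶜ
      · rw [indicator_of_mem hx]
        refine le_minSqDist hγ fun c hc => ?_
        have hxc : ε ≤ |x - c| := by
          simpa [E, Real.dist_eq] using (mem_compl_iff _ _).1 hx ∘ mem_biUnion hc
        simpa using pow_le_pow_left₀ hε hxc 2
      · rw [indicator_of_notMem hx]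
        exact minSqDist_nonneg

end Quantization

open Asymptotics in
theorem tendsto_div_of_abs_sub_mul_le {α : Type*} {l : Filter α} {u v : α → ℝ} {κ M : ℝ}
    (hκ : 0 < κ) (hv : Tendsto v l atTop) (h : ∀ᶠ x in l, |u x - κ * v x| ≤ M) :
    Tendsto (fun x => v x / u x) l (𝓝 κ⁻¹) := by
  have hκv : Tendsto (fun x => κ * v x) l atTop := hv.const_mul_atTop hκ
  have hequiv : u ~[l] fun x => κ * v x :=
    (IsBigO.of_bound M (h.mono fun x hx => by simpa using hx) :
        (u - fun x => κ * v x) =O[l] fun _ => (1 : ℝ)).trans_isLittleO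
      ((isLittleO_one_left_iff ℝ).2 (tendsto_norm_atTop_atTop.comp hκv))
  refine (IsEquivalent.refl.div hequiv.symm).tendsto_nhds (tendsto_const_nhds.congr' ?_)
  filter_upwards [hv.eventually_gt_atTop 0] with x hx
  simp only [Pi.div_apply]
  field_simp

section Dimension

variable (P : Measure ℝ) {s c C : ℝ}

theorem abs_log_quantErr_add_le (hs : 1 < s) (hc : 0 < c)
    (hlow : ∀ k : ℕ, c / s ^ (2 * k) ≤ quantErr P (2 ^ k))
    (hup : ∀ k : ℕ, quantErr P (2 ^ (k + 1)) ≤ C / s ^ (2 * k)) {n : ℕ} (hn : 2 ≤ n) :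
    |log (quantErr P n) + 2 * log s * logb 2 n| ≤ |log c| + |log C| + 4 * log s := by
  obtain ⟨j, hj⟩ : ∃ j, Nat.log 2 n = j + 1 :=
    ⟨Nat.log 2 n - 1, by have := Nat.log_pos one_lt_two hn; omega⟩
  have hn₁ : 2 ^ (j + 1) ≤ n := hj ▸ Nat.pow_log_le_self 2 (by omega)
  have hn₂ : n < 2 ^ (j + 2) := by simpa [hj] using Nat.lt_pow_succ_log_self one_lt_two n
  have hlower : c / s ^ (2 * (j + 2)) ≤ quantErr P n :=
    (hlow _).trans (quantErr_antitone P (by omega) hn₂.le)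
  have hupper : quantErr P n ≤ C / s ^ (2 * j) :=
    (quantErr_antitone P Nat.one_le_two_pow hn₁).trans (hup j)
  have hs0 : 0 < s := one_pos.trans hs
  have hV : 0 < quantErr P n := (by positivity : 0 < c / s ^ (2 * (j + 2))).trans_le hlower
  have hC : 0 < C := (div_pos_iff_of_pos_right (by positivity)).1 (hV.trans_le hupper)
  have hlogV₁ := Real.log_le_log (by positivity) hlower
  have hlogV₂ := Real.log_le_log hV hupper
  rw [Real.log_div hc.ne' (by positivity), Real.log_pow] at hlogV₁
  rw [Real.log_div hC.ne' (by positivity), Real.log_pow] at hlogV₂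
  push_cast at hlogV₁ hlogV₂
  have hlogb₁ : (j + 1 : ℝ) ≤ logb 2 n := by
    exact_mod_cast hj ▸ Real.natLog_le_logb n 2
  have hlogb₂ : logb 2 n < j + 2 := by
    have hfloor : ⌊logb 2 n⌋₊ = j + 1 := by exact_mod_cast hj ▸ Real.natFloor_logb_natCast 2 n
    have := Nat.lt_floor_add_one (logb 2 n)
    rw [hfloor] at this
    push_cast at this
    linarith
  have hlogs : 0 < log s := Real.log_pos hs
  rw [abs_le]
  constructor <;> nlinarith [neg_abs_le (log c), le_abs_self (log C), abs_nonneg (log c),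
    abs_nonneg (log C)]

theorem tendsto_quantDim_of_dyadic_bounds (hs : 1 < s) (hc : 0 < c)
    (hlow : ∀ k : ℕ, c / s ^ (2 * k) ≤ quantErr P (2 ^ k))
    (hup : ∀ k : ℕ, quantErr P (2 ^ (k + 1)) ≤ C / s ^ (2 * k)) :
    Tendsto (fun n : ℕ => 2 * log n / -log (quantErr P n)) atTop (𝓝 (log 2 / log s)) := by
  rw [← inv_div]
  refine tendsto_div_of_abs_sub_mul_le (M := |log c| + |log C| + 4 * log s)
    (div_pos (Real.log_pos hs) (Real.log_pos one_lt_two))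
    ((tendsto_log_atTop.comp tendsto_natCast_atTop_atTop).const_mul_atTop two_pos) ?_
  filter_upwards [eventually_ge_atTop 2] with n hn
  rw [← abs_neg]
  convert abs_log_quantErr_add_le P hs hc hlow hup hn using 2
  rw [Real.logb]
  ring

end Dimension

def IsSelfSimilar {X : Type*} [MeasurableSpace X] (Q : Measure X) (S₁ S₂ : X → X) : Prop :=
  Q = (2 : ℝ≥0∞)⁻¹ • Q.map S₁ + (2 : ℝ≥0∞)⁻¹ • Q.map S₂

namespace IsSelfSimilar

variable {X : Type*} [MeasurableSpace X] {Q : Measure X} {S₁ S₂ : X → X}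

theorem apply (hQ : IsSelfSimilar Q S₁ S₂) (hS₁ : Measurable S₁) (hS₂ : Measurable S₂)
    {U : Set X} (hU : MeasurableSet U) :
    Q U = 2⁻¹ * Q (S₁ ⁻¹' U) + 2⁻¹ * Q (S₂ ⁻¹' U) := by
  conv_lhs => rw [hQ]
  simp only [Measure.add_apply, Measure.smul_apply, Measure.map_apply hS₁ hU,
    Measure.map_apply hS₂ hU, smul_eq_mul]

theorem measure_le_of_preimage_subset (hQ : IsSelfSimilar Q S₁ S₂) (hS₁ : Measurable S₁)
    (hS₂ : Measurable S₂) {U V : Set X} (hU : MeasurableSet U) (h₁ : S₁ ⁻¹' U ⊆ V)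
    (h₂ : S₂ ⁻¹' U ⊆ V) : Q U ≤ Q V :=
  calc Q U = 2⁻¹ * Q (S₁ ⁻¹' U) + 2⁻¹ * Q (S₂ ⁻¹' U) := hQ.apply hS₁ hS₂ hU
    _ ≤ 2⁻¹ * Q V + 2⁻¹ * Q V := by gcongr
    _ = Q V := by rw [← add_mul, ENNReal.inv_two_add_inv_two, one_mul]

end IsSelfSimilar

open Metric in
/-- As `infDist (Sᵢ x) I ≤ K * infDist x I`, the mass of `{s < infDist · I}` is at most that of
`{s / K ^ k < infDist · I}` for every `k`, and the latter tends to `0`. -/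
theorem IsSelfSimilar.ae_mem {X : Type*} [MetricSpace X] [MeasurableSpace X] [BorelSpace X]
    {Q : Measure X} [IsFiniteMeasure Q] {S₁ S₂ : X → X} {K : NNReal} (hK0 : 0 < K) (hK1 : K < 1)
    (hS₁ : LipschitzWith K S₁) (hS₂ : LipschitzWith K S₂) {I : Set X} (hI : IsClosed I)
    (hIne : I.Nonempty) (h₁ : MapsTo S₁ I I) (h₂ : MapsTo S₂ I I) (hQ : IsSelfSimilar Q S₁ S₂) :
    ∀ᵐ x ∂Q, x ∈ I := by
  have hr0 : (0 : ℝ) < K := hK0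
  have hr1 : (K : ℝ) < 1 := hK1
  set U : ℝ → Set X := fun s => {x | s < infDist x I}
  have hUmeas : ∀ s, MeasurableSet (U s) := fun s =>
    measurableSet_lt measurable_const (continuous_infDist_pt I).measurable
  have hcontract : ∀ {S : X → X}, LipschitzWith K S → MapsTo S I I →
      ∀ s, S ⁻¹' U s ⊆ U (s / K) := by
    intro S hS hSI s x (hx : s < infDist (S x) I)
    have : infDist (S x) I / K ≤ infDist x I := (le_infDist hIne).2 fun y hy =>
      (div_le_iff₀' hr0).2 ((infDist_le_dist_of_mem (hSI hy)).trans (hS.dist_le_mul x y))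
    exact (div_lt_div_of_pos_right hx hr0).trans_le this
  have hiter : ∀ s, ∀ k : ℕ, Q (U s) ≤ Q (U (s / K ^ k)) := by
    intro s k
    induction k with
    | zero => simp
    | succ k ih =>
      refine ih.trans (hQ.measure_le_of_preimage_subset hS₁.continuous.measurable
        hS₂.continuous.measurable (hUmeas _) ?_ ?_) <;>
      · rw [pow_succ, ← div_div]
        exact hcontract ‹_› ‹_› _
  have hnull : ∀ s > 0, Q (U s) = 0 := by
    intro s hs
    have hanti : Antitone fun k : ℕ => U (s / K ^ k) := fun k l hkl x hx =>
      (div_le_div_of_nonneg_left hs.le (pow_pos hr0 l)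
        (pow_le_pow_of_le_one hr0.le hr1.le hkl)).trans_lt hx
    have hempty : ⋂ k : ℕ, U (s / K ^ k) = ∅ := by
      refine eq_empty_of_forall_notMem fun x hx => ?_
      have hd : 0 < infDist x I + 1 := infDist_nonneg.trans_lt (lt_add_one _)
      obtain ⟨k, hk⟩ := exists_pow_lt_of_lt_one (div_pos hs hd) hr1
      have hxk : s / K ^ k < infDist x I := mem_iInter.1 hx k
      rw [lt_div_iff₀ hd, ← lt_div_iff₀' (pow_pos hr0 k)] at hk
      linarith
    have hlim := tendsto_measure_iInter_atTop (μ := Q) (fun k => (hUmeas _).nullMeasurableSet)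
      hanti ⟨0, measure_ne_top _ _⟩
    rw [hempty, measure_empty] at hlim
    exact le_antisymm (ge_of_tendsto' hlim (hiter s)) zero_le
  rw [ae_iff]
  refine measure_mono_null (fun x hx => ?_) (measure_iUnion_null fun n : ℕ =>
    hnull (1 / (n + 1)) Nat.one_div_pos_of_nat)
  obtain ⟨n, hn⟩ := exists_nat_one_div_lt ((hI.notMem_iff_infDist_pos hIne).1 hx)
  exact mem_iUnion.2 ⟨n, hn⟩

theorem lipschitzWith_div_add (s a : ℝ) : LipschitzWith ‖s⁻¹‖₊ fun x : ℝ => x / s + a :=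
  LipschitzWith.of_dist_le_mul fun x y => by
    simp [Real.dist_eq, div_eq_mul_inv, ← sub_mul, abs_mul, mul_comm]

theorem IsSelfSimilar.ae_mem_Icc {Q : Measure ℝ} [IsFiniteMeasure Q] {s a b A B : ℝ}
    (hQ : IsSelfSimilar Q (fun x => x / s + a) (fun x => x / s + b)) (hs : 1 < s) (hAB : A ≤ B)
    (h₁ : MapsTo (fun x => x / s + a) (Icc A B) (Icc A B))
    (h₂ : MapsTo (fun x => x / s + b) (Icc A B) (Icc A B)) : ∀ᵐ x ∂Q, x ∈ Icc A B := by
  have hK1 : ‖s⁻¹‖₊ < 1 := by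
    rw [← NNReal.coe_lt_coe, coe_nnnorm, Real.norm_eq_abs, abs_of_pos (by positivity)]
    exact inv_lt_one_of_one_lt₀ hs
  exact hQ.ae_mem (nnnorm_pos.2 (inv_ne_zero (by positivity))) hK1 (lipschitzWith_div_add s a)
    (lipschitzWith_div_add s b) isClosed_Icc (nonempty_Icc.2 hAB) h₁ h₂

theorem IsSelfSimilar.integral_eq {X : Type*} [TopologicalSpace X] [MeasurableSpace X]
    [BorelSpace X] [T2Space X] {Q : Measure X} [IsFiniteMeasure Q] {S₁ S₂ : X → X}
    (hQ : IsSelfSimilar Q S₁ S₂) (hS₁ : Continuous S₁) (hS₂ : Continuous S₂) {K : Set X}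
    (hK : IsCompact K) (hQK : ∀ᵐ x ∂Q, x ∈ K) {f : X → ℝ} (hf : Continuous f) :
    ∫ x, f x ∂Q = 2⁻¹ * ∫ x, f (S₁ x) ∂Q + 2⁻¹ * ∫ x, f (S₂ x) ∂Q := by
  have hint : ∀ {S : X → X}, Continuous S → Integrable f (Q.map S) := fun hS =>
    (integrable_map_measure hf.aestronglyMeasurable hS.aemeasurable).2
      ((hf.comp hS).integrable_of_ae_mem hK hQK)
  conv_lhs => rw [hQ]
  rw [integral_add_measure ((hint hS₁).smul_measure (by simp))
    ((hint hS₂).smul_measure (by simp)), integral_smul_measure, integral_smul_measure,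
    integral_map hS₁.aemeasurable hf.aestronglyMeasurable,
    integral_map hS₂.aemeasurable hf.aestronglyMeasurable]
  simp

section SelfSimilarOnLine

variable {Q : Measure ℝ} {s a b A B : ℝ}

theorem minSqDist_div_add_le {γ : Finset ℝ} (hγ : γ.Nonempty) (hs : s ≠ 0) (t x : ℝ) :
    minSqDist (γ.image fun c => c / s + t) (x / s + t) ≤ minSqDist γ x / s ^ 2 := by
  rw [le_div_iff₀ (by positivity)]
  refine le_minSqDist hγ fun c hc => ?_
  calc minSqDist (γ.image fun c => c / s + t) (x / s + t) * s ^ 2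
      ≤ (x / s + t - (c / s + t)) ^ 2 * s ^ 2 := by
        gcongr
        exact minSqDist_le (Finset.mem_image_of_mem _ hc)
    _ = (x - c) ^ 2 := by field_simp; ring

theorem IsSelfSimilar.distortion_image_union_le [IsFiniteMeasure Q]
    (hQ : IsSelfSimilar Q (fun x => x / s + a) (fun x => x / s + b))
    (hs : s ≠ 0) (hsupp : ∀ᵐ x ∂Q, x ∈ Icc A B) {γ : Finset ℝ} (hγ : γ.Nonempty) :
    distortion Q ((γ.image fun c => c / s + a) ∪ γ.image fun c => c / s + b) ≤
      distortion Q γ / s ^ 2 := by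
  set γ' := (γ.image fun c => c / s + a) ∪ γ.image fun c => c / s + b
  have hγ' : γ'.Nonempty := (hγ.image _).mono Finset.subset_union_left
  have hint : ∀ {f : ℝ → ℝ}, Continuous f → Integrable f Q :=
    fun hf => hf.integrable_of_ae_mem isCompact_Icc hsupp
  have hS : ∀ t : ℝ, Continuous fun x : ℝ => x / s + t := fun t => by fun_prop
  have hle : ∀ t ∈ ({a, b} : Set ℝ),
      ∫ x, minSqDist γ' (x / s + t) ∂Q ≤ distortion Q γ / s ^ 2 := by
    rintro t ht
    rw [distortion_eq_integral_minSqDist, ← integral_div]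
    refine integral_mono (hint ((continuous_minSqDist hγ').comp (hS t)))
      (hint ((continuous_minSqDist hγ).div_const _)) fun x => ?_
    refine (minSqDist_anti ((hγ.image _)) ?_).trans (minSqDist_div_add_le hγ hs t x)
    rcases ht with rfl | rfl
    · exact Finset.subset_union_left
    · exact Finset.subset_union_right
  rw [distortion_eq_integral_minSqDist, hQ.integral_eq (hS a) (hS b) isCompact_Icc hsupp
    (continuous_minSqDist hγ')]
  linarith [hle a (by simp), hle b (by simp)]

theorem IsSelfSimilar.exists_distortion_le [IsFiniteMeasure Q]
    (hQ : IsSelfSimilar Q (fun x => x / s + a) (fun x => x / s + b))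
    (hs : s ≠ 0) (hsupp : ∀ᵐ x ∂Q, x ∈ Icc A B) (k : ℕ) :
    ∃ γ : Finset ℝ, γ.Nonempty ∧ γ.card ≤ 2 ^ k ∧
      distortion Q γ ≤ distortion Q {0} / s ^ (2 * k) := by
  induction k with
  | zero => exact ⟨{0}, Finset.singleton_nonempty 0, by simp, by simp⟩
  | succ k ih =>
    obtain ⟨γ, hγ, hcard, hdist⟩ := ih
    refine ⟨_, (hγ.image _).mono Finset.subset_union_left, ?_,
      (hQ.distortion_image_union_le hs hsupp hγ).trans ?_⟩
    · calc _ ≤ (γ.image fun c => c / s + a).card + (γ.image fun c => c / s + b).card :=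
            Finset.card_union_le _ _
        _ ≤ γ.card + γ.card := add_le_add Finset.card_image_le Finset.card_image_le
        _ ≤ 2 ^ (k + 1) := by rw [pow_succ]; omega
    · calc distortion Q γ / s ^ 2 ≤ distortion Q {0} / s ^ (2 * k) / s ^ 2 := by gcongr
        _ = distortion Q {0} / s ^ (2 * (k + 1)) := by rw [div_div, ← pow_add]; ring_nf

theorem IsSelfSimilar.exists_measure_ball_le
    (hQ : IsSelfSimilar Q (fun x => x / s + a) (fun x => x / s + b)) (hs : 0 < s)
    (hsupp : ∀ᵐ x ∂Q, x ∈ Icc A B) {g : ℝ}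
    (hgap : ∀ x ∈ Icc A B, ∀ y ∈ Icc A B, x / s + a + g ≤ y / s + b) {ε : ℝ} (hε : 2 * ε ≤ g)
    (x : ℝ) : ∃ y, Q (Metric.ball x ε) ≤ 2⁻¹ * Q (Metric.ball y (s * ε)) := by
  have hS : ∀ t : ℝ, Measurable fun x : ℝ => x / s + t := fun t => by fun_prop
  have hnull : Q (Icc A B)ᶜ = 0 := ae_iff.1 hsupp
  have hpre : ∀ t,
      (fun z => z / s + t) ⁻¹' Metric.ball x ε ⊆ Metric.ball (s * (x - t)) (s * ε) := by
    intro t z hz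
    simp only [mem_preimage, Real.ball_eq_Ioo, mem_Ioo] at hz ⊢
    have hz' : z = s * (z / s + t) - s * t := by field_simp; ring
    constructor <;> nlinarith [hz.1, hz.2]
  rw [hQ.apply (hS a) (hS b) measurableSet_ball]
  -- as `2 * ε ≤ g`, the ball meets at most one of the images of `[A, B]` under the two maps
  by_cases h : ∃ z ∈ Icc A B, z / s + a ∈ Metric.ball x ε
  · obtain ⟨z, hz, hza⟩ := h
    have hb : (fun z => z / s + b) ⁻¹' Metric.ball x ε ⊆ (Icc A B)ᶜ := by
      intro w hw hwI
      have := hgap z hz w hwI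
      simp only [mem_preimage, Real.ball_eq_Ioo, mem_Ioo] at hw hza
      linarith
    refine ⟨s * (x - a), ?_⟩
    rw [measure_mono_null hb hnull, mul_zero, add_zero]
    exact mul_le_mul_right (measure_mono (hpre a)) _
  · push Not at h
    have ha : (fun z => z / s + a) ⁻¹' Metric.ball x ε ⊆ (Icc A B)ᶜ := fun w hw hwI => h w hwI hw
    refine ⟨s * (x - b), ?_⟩
    rw [measure_mono_null ha hnull, mul_zero, zero_add]
    exact mul_le_mul_right (measure_mono (hpre b)) _

theorem IsSelfSimilar.measure_ball_le [IsProbabilityMeasure Q]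
    (hQ : IsSelfSimilar Q (fun x => x / s + a) (fun x => x / s + b)) (hs : 1 ≤ s)
    (hsupp : ∀ᵐ x ∂Q, x ∈ Icc A B) {g : ℝ} (hg : 0 ≤ g)
    (hgap : ∀ x ∈ Icc A B, ∀ y ∈ Icc A B, x / s + a + g ≤ y / s + b) (k : ℕ) (x : ℝ) :
    Q (Metric.ball x (g / (2 * s ^ k))) ≤ (2 ^ k)⁻¹ := by
  induction k generalizing x with
  | zero => simpa using prob_le_one
  | succ k ih =>
    have hsk : 1 ≤ s ^ (k + 1) := one_le_pow₀ hs
    have hε : 2 * (g / (2 * s ^ (k + 1))) ≤ g := by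
      rw [mul_div_assoc', mul_div_mul_left _ _ two_ne_zero]
      exact div_le_self hg hsk
    obtain ⟨y, hy⟩ := hQ.exists_measure_ball_le (by linarith) hsupp hgap hε x
    have hrad : s * (g / (2 * s ^ (k + 1))) = g / (2 * s ^ k) := by
      field_simp
      ring
    calc _ ≤ 2⁻¹ * Q (Metric.ball y (g / (2 * s ^ k))) := hrad ▸ hy
      _ ≤ 2⁻¹ * (2 ^ k)⁻¹ := by gcongr; exact ih y
      _ = (2 ^ (k + 1))⁻¹ := by
        rw [pow_succ, ENNReal.mul_inv (by simp) (by simp), mul_comm]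

theorem IsSelfSimilar.le_distortion [IsProbabilityMeasure Q] {g : ℝ}
    (hQ : IsSelfSimilar Q (fun x => x / s + a) (fun x => x / s + b)) (hs : 1 ≤ s)
    (hsupp : ∀ᵐ x ∂Q, x ∈ Icc A B) (hg : 0 ≤ g)
    (hgap : ∀ x ∈ Icc A B, ∀ y ∈ Icc A B, x / s + a + g ≤ y / s + b) {γ : Finset ℝ}
    (hγ : γ.Nonempty) {k : ℕ} (hcard : γ.card ≤ 2 ^ k) :
    3 * g ^ 2 / (16 * s ^ 4) / s ^ (2 * k) ≤ distortion Q γ := by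
  set ε := g / (2 * s ^ (k + 2))
  set E := ⋃ c ∈ γ, Metric.ball c ε
  have hE : MeasurableSet E := γ.measurableSet_biUnion fun _ _ => measurableSet_ball
  have hQE : Q E ≤ 4⁻¹ :=
    calc Q E ≤ ∑ c ∈ γ, Q (Metric.ball c ε) := measure_biUnion_finset_le γ _
      _ ≤ ∑ _c ∈ γ, (2 ^ (k + 2) : ℝ≥0∞)⁻¹ := Finset.sum_le_sum fun c _ =>
          hQ.measure_ball_le hs hsupp hg hgap (k + 2) c
      _ ≤ 2 ^ k * (2 ^ (k + 2))⁻¹ := by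
          rw [Finset.sum_const, nsmul_eq_mul]
          gcongr
          exact_mod_cast hcard
      _ = 4⁻¹ := by
          rw [pow_add, ENNReal.mul_inv (by simp) (by simp), ← mul_assoc,
            ENNReal.mul_inv_cancel (by simp) (by simp), one_mul]
          norm_num
  have hQEc : 3 / 4 ≤ Q.real Eᶜ := by
    have : Q.real E ≤ 4⁻¹ := by
      simpa [measureReal_def] using ENNReal.toReal_mono (by norm_num) hQE
    rw [measureReal_compl hE, probReal_univ]
    linarith
  calc 3 * g ^ 2 / (16 * s ^ 4) / s ^ (2 * k) = 3 / 4 * ε ^ 2 := by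
        simp only [ε]
        field_simp
        ring
    _ ≤ Q.real Eᶜ * ε ^ 2 := by gcongr
    _ ≤ distortion Q γ := measureReal_compl_mul_sq_le_distortion Q hγ
        ((continuous_minSqDist hγ).integrable_of_ae_mem isCompact_Icc hsupp) (by positivity)

end SelfSimilarOnLine


structure DyadicQuantBounds (P : Measure ℝ) (s c C : ℝ) : Prop where
  integrable : ∀ γ : Finset ℝ, γ.Nonempty → Integrable (minSqDist γ) P
  exists_distortion_le : ∀ k : ℕ, ∃ γ : Finset ℝ, γ.Nonempty ∧ γ.card ≤ 2 ^ k ∧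
    distortion P γ ≤ C / s ^ (2 * k)
  le_distortion : ∀ (k : ℕ) (γ : Finset ℝ), γ.Nonempty → γ.card ≤ 2 ^ k →
    c / s ^ (2 * k) ≤ distortion P γ

theorem IsSelfSimilar.dyadicQuantBounds {Q : Measure ℝ} [IsProbabilityMeasure Q]
    {s a b A B g : ℝ} (hQ : IsSelfSimilar Q (fun x => x / s + a) (fun x => x / s + b))
    (hs : 1 < s) (hAB : A ≤ B) (hA : A ≤ A / s + a) (hB : B / s + b ≤ B) (hg : 0 ≤ g)
    (hsep : B / s + a + g ≤ A / s + b) :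
    DyadicQuantBounds Q s (3 * g ^ 2 / (16 * s ^ 4)) (distortion Q {0}) :=
  have hdiv : ∀ {x y : ℝ}, x ≤ y → x / s ≤ y / s := fun h =>
    div_le_div_of_nonneg_right h (by linarith)
  have hABs := hdiv hAB
  have h₁ : MapsTo (fun x => x / s + a) (Icc A B) (Icc A B) := fun x hx =>
    ⟨by linarith [hdiv hx.1], by linarith [hdiv hx.2]⟩
  have h₂ : MapsTo (fun x => x / s + b) (Icc A B) (Icc A B) := fun x hx =>
    ⟨by linarith [hdiv hx.1], by linarith [hdiv hx.2]⟩
  have hgap : ∀ x ∈ Icc A B, ∀ y ∈ Icc A B, x / s + a + g ≤ y / s + b := fun x hx y hy => by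
    linarith [hdiv hx.2, hdiv hy.1]
  have hsupp := hQ.ae_mem_Icc hs hAB h₁ h₂
  { integrable := fun _ hγ => (continuous_minSqDist hγ).integrable_of_ae_mem isCompact_Icc hsupp
    exists_distortion_le := hQ.exists_distortion_le (by positivity) hsupp
    le_distortion := fun _ _ hγ hcard => hQ.le_distortion hs.le hsupp hg hgap hγ hcard }

namespace DyadicQuantBounds

variable {P P₁ P₂ : Measure ℝ} {s c C : ℝ}

theorem le_quantErr (h : DyadicQuantBounds P s c C) (k : ℕ) :
    c / s ^ (2 * k) ≤ quantErr P (2 ^ k) :=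
  _root_.le_quantErr P Nat.one_le_two_pow (h.le_distortion k)

theorem quantErr_le (h : DyadicQuantBounds P s c C) (k : ℕ) :
    quantErr P (2 ^ (k + 1)) ≤ C / s ^ (2 * k) :=
  have ⟨_, hγ, hcard, hdist⟩ := h.exists_distortion_le k
  (quantErr_le_distortion P hγ (hcard.trans (Nat.pow_le_pow_right two_pos k.le_succ))).trans hdist

theorem tendsto_quantDim (h : DyadicQuantBounds P s c C) (hs : 1 < s) (hc : 0 < c) :
    Tendsto (fun n : ℕ => 2 * log n / -log (quantErr P n)) atTop (𝓝 (log 2 / log s)) :=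
  tendsto_quantDim_of_dyadic_bounds P hs hc h.le_quantErr h.quantErr_le

theorem upper_nonneg (h : DyadicQuantBounds P s c C) : 0 ≤ C := by
  obtain ⟨_, -, -, hdist⟩ := h.exists_distortion_le 0
  simpa using (distortion_nonneg P).trans hdist

variable {s' c₁ C₁ c₂ C₂ : ℝ}

theorem le_quantErr_mix (h₁ : DyadicQuantBounds P₁ s c₁ C₁)
    (h₂ : DyadicQuantBounds P₂ s' c₂ C₂) (k : ℕ) :
    c₁ / 2 / s ^ (2 * k) ≤ quantErr (mix P₁ P₂) (2 ^ k) := by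
  refine _root_.le_quantErr _ Nat.one_le_two_pow fun γ hγ hcard => ?_
  rw [distortion_mix P₁ P₂ (h₁.integrable γ hγ) (h₂.integrable γ hγ), div_right_comm]
  linarith [h₁.le_distortion k γ hγ hcard, distortion_nonneg P₂ (γ := γ)]

theorem quantErr_mix_le (h₁ : DyadicQuantBounds P₁ s c₁ C₁)
    (h₂ : DyadicQuantBounds P₂ s' c₂ C₂) (hs : 0 < s) (hss' : s ≤ s') (k : ℕ) :
    quantErr (mix P₁ P₂) (2 ^ (k + 1)) ≤ (C₁ + C₂) / 2 / s ^ (2 * k) := by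
  obtain ⟨γ₁, hγ₁, hcard₁, hdist₁⟩ := h₁.exists_distortion_le k
  obtain ⟨γ₂, hγ₂, hcard₂, hdist₂⟩ := h₂.exists_distortion_le k
  have hγ : (γ₁ ∪ γ₂).Nonempty := hγ₁.mono Finset.subset_union_left
  have hcard : (γ₁ ∪ γ₂).card ≤ 2 ^ (k + 1) :=
    (Finset.card_union_le _ _).trans (by rw [pow_succ]; omega)
  have hd₁ := distortion_anti P₁ hγ₁ Finset.subset_union_left (h₁.integrable _ hγ₁)
    (h₁.integrable _ hγ)
  have hd₂ := distortion_anti P₂ hγ₂ Finset.subset_union_right (h₂.integrable _ hγ₂)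
    (h₂.integrable _ hγ)
  have hss'k : C₂ / s' ^ (2 * k) ≤ C₂ / s ^ (2 * k) := by
    have := h₂.upper_nonneg
    gcongr
  refine (quantErr_le_distortion _ hγ hcard).trans ?_
  rw [distortion_mix P₁ P₂ (h₁.integrable _ hγ) (h₂.integrable _ hγ), div_right_comm, add_div]
  linarith

end DyadicQuantBounds

theorem stmt18 (P₁ P₂ : Measure ℝ) [IsProbabilityMeasure P₁] [IsProbabilityMeasure P₂]
    (hP₁ : P₁ = (2 : ℝ≥0∞)⁻¹ • P₁.map (fun x => x / 3) +
      (2 : ℝ≥0∞)⁻¹ • P₁.map (fun x => x / 3 + 2/9))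
    (hP₂ : P₂ = (2 : ℝ≥0∞)⁻¹ • P₂.map (fun x => x / 4 + 1/2) +
      (2 : ℝ≥0∞)⁻¹ • P₂.map (fun x => x / 4 + 3/4))
    (P : Measure ℝ) (hP : P = mix P₁ P₂) :
    Tendsto (fun n : ℕ => 2 * Real.log n / (- Real.log (quantErr P n))) atTop
      (nhds (Real.log 2 / Real.log 3)) ∧
    Tendsto (fun n : ℕ => 2 * Real.log n / (- Real.log (quantErr P₁ n))) atTop
      (nhds (Real.log 2 / Real.log 3)) ∧
    Tendsto (fun n : ℕ => 2 * Real.log n / (- Real.log (quantErr P₂ n))) atTop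
      (nhds (1/2 : ℝ)) ∧
    Real.log 2 / Real.log 3 = max (Real.log 2 / Real.log 3) (1/2 : ℝ) := by
  have hself₁ : IsSelfSimilar P₁ (fun x => x / 3 + 0) (fun x => x / 3 + 2 / 9) := by
    simpa only [IsSelfSimilar, add_zero] using hP₁
  have h₁ := hself₁.dyadicQuantBounds (A := 0) (B := 1 / 3) (g := 1 / 9)
    (by norm_num) (by norm_num) (by norm_num) (by norm_num) (by norm_num) (by norm_num)
  have h₂ := IsSelfSimilar.dyadicQuantBounds hP₂ (A := 2 / 3) (B := 1) (g := 1 / 6)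
    (by norm_num) (by norm_num) (by norm_num) (by norm_num) (by norm_num) (by norm_num)
  have hlog4 : log 4 = 2 * log 2 := by
    rw [show (4 : ℝ) = 2 ^ 2 by norm_num, Real.log_pow, Nat.cast_ofNat]
  refine ⟨hP ▸ tendsto_quantDim_of_dyadic_bounds _ (by norm_num) (by norm_num)
      (h₁.le_quantErr_mix h₂) (h₁.quantErr_mix_le h₂ (by norm_num) (by norm_num)),
    h₁.tendsto_quantDim (by norm_num) (by norm_num), ?_, ?_⟩
  · convert h₂.tendsto_quantDim (by norm_num) (by norm_num) using 2
    rw [hlog4, div_mul_cancel_right₀ (Real.log_pos one_lt_two).ne', one_div]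
  · refine (max_eq_left ((le_div_iff₀ (Real.log_pos (by norm_num))).2 ?_)).symm
    linarith [Real.log_lt_log (by norm_num : (0 : ℝ) < 3) (by norm_num : (3 : ℝ) < 4)]
end
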